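/- arXiv:1808.02156 — 4 statements merged into one kernel-verified Lean document; each statement's English description precedes it below -/
import Mathlib

section
/- Assume the sign-coherence of C-matrices: for every skew-symmetrizable initial integer matrix and every path, the associated C-matrix is column sign-coherent. Let B be a skew-symmetrizable n×n integer matrix with positive diagonal skew-symmetrizer D, and let t be reached from t_0 by a path. Then the principal extension satisfies the 2n×2n block identity B̄_t = [[B_t, −D^{−1}(C^{B;t_0}_t)^T D], [C^{B;t_0}_t, O]]. -/
open Matrix

section Defs

variable {ι : Type} [Fintype ι] [DecidableEq ι]
variable {R : Type} [CommRing R] [LinearOrder R] [IsStrictOrderedRing R]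

/-- Entrywise positive part `[A]₊`. -/
def matPos (A : Matrix ι ι R) : Matrix ι ι R := fun i j => max (A i j) 0

/-- `A^{k•}`: the matrix keeping only the `k`-th row of `A`. -/
def rowSel (k : ι) (A : Matrix ι ι R) : Matrix ι ι R := fun i j => if i = k then A i j else 0

/-- `A^{•k}`: the matrix keeping only the `k`-th column of `A`. -/
def colSel (k : ι) (A : Matrix ι ι R) : Matrix ι ι R := fun i j => if j = k then A i j else 0

/-- Entrywise maximum of two matrices. -/
def emax (A B : Matrix ι ι R) : Matrix ι ι R := fun i j => max (A i j) (B i j)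

/-- `J_ℓ`: identity matrix with `(ℓ,ℓ)` entry replaced by `-1`. -/
def Jmat (ℓ : ι) : Matrix ι ι R := Matrix.diagonal fun i => if i = ℓ then -1 else 1

/-- Matrix mutation `μ_k(B)` in direction `k`. -/
def mutate (B : Matrix ι ι R) (k : ι) : Matrix ι ι R := fun i j =>
  if i = k ∨ j = k then -(B i j)
  else B i j + max (B i k) 0 * B k j + B i k * max (-(B k j)) 0

/-- The data `(B_t, C_t, G_t, F_t)` attached to a vertex. -/
structure SeedData (ι R : Type) where
  B : Matrix ι ι R
  C : Matrix ι ι R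
  G : Matrix ι ι R
  F : Matrix ι ι R

/-- One final-seed mutation step in direction `ℓ` (with initial exchange matrix `B0`). -/
def seedStep (B0 : Matrix ι ι R) (s : SeedData ι R) (ℓ : ι) : SeedData ι R where
  B := mutate s.B ℓ
  C := s.C * (Jmat ℓ + rowSel ℓ (matPos s.B)) + colSel ℓ (matPos (-s.C)) * s.B
  G := s.G * (Jmat ℓ + colSel ℓ (matPos s.B)) - B0 * colSel ℓ (matPos s.C)
  F := s.F * Jmat ℓ + emax (colSel ℓ (matPos s.C) + s.F * colSel ℓ (matPos s.B))
      (colSel ℓ (matPos (-s.C)) + s.F * colSel ℓ (matPos (-s.B)))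

/-- The seed data at the endpoint of the path `p` starting from the initial vertex. -/
def seedOf (B0 : Matrix ι ι R) (p : List ι) : SeedData ι R :=
  p.foldl (seedStep B0) ⟨B0, 1, 1, 0⟩

/-- The exchange matrix `B_t` at the end of the path `p`. -/
def Bpath (B : Matrix ι ι R) (p : List ι) : Matrix ι ι R := (seedOf B p).B

/-- The `C`-matrix `C^{B;t_0}_t` at the end of the path `p`. -/
def Cmat (B : Matrix ι ι R) (p : List ι) : Matrix ι ι R := (seedOf B p).C

/-- The `G`-matrix `G^{B;t_0}_t` at the end of the path `p`. -/
def Gmat (B : Matrix ι ι R) (p : List ι) : Matrix ι ι R := (seedOf B p).G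

/-- The `F`-matrix `F^{B;t_0}_t` at the end of the path `p`. -/
def Fmat (B : Matrix ι ι R) (p : List ι) : Matrix ι ι R := (seedOf B p).F

/-- `B` is skew-symmetrizable: `DB` is skew-symmetric for some positive diagonal `D`. -/
def IsSkewSymmetrizable (B : Matrix ι ι ℤ) : Prop :=
  ∃ d : ι → ℤ, (∀ i, 0 < d i) ∧ (Matrix.diagonal d * B)ᵀ = -(Matrix.diagonal d * B)

/-- Column sign-coherence: every column is nonzero and has all entries of one sign. -/
def ColSignCoherent (A : Matrix ι ι ℤ) : Prop :=
  ∀ j, (∃ i, A i j ≠ 0) ∧ ((∀ i, 0 ≤ A i j) ∨ (∀ i, A i j ≤ 0))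

/-- Row sign-coherence: every row is nonzero and has all entries of one sign. -/
def RowSignCoherent (A : Matrix ι ι ℤ) : Prop :=
  ∀ i, (∃ j, A i j ≠ 0) ∧ ((∀ j, 0 ≤ A i j) ∨ (∀ j, A i j ≤ 0))

/-- `ε` is the column sign `ε_{•ℓ}(A)` of the (sign-coherent, nonzero) `ℓ`-th column of `A`. -/
def IsColSign (ε : ℤ) (A : Matrix ι ι ℤ) (ℓ : ι) : Prop :=
  (ε = 1 ∨ ε = -1) ∧ (∃ i, A i ℓ ≠ 0) ∧ ∀ i, 0 ≤ ε * A i ℓ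

/-- `ε` is the row sign `ε_{k•}(A)` of the (sign-coherent, nonzero) `k`-th row of `A`. -/
def IsRowSign (ε : ℤ) (A : Matrix ι ι ℤ) (k : ι) : Prop :=
  (ε = 1 ∨ ε = -1) ∧ (∃ j, A k j ≠ 0) ∧ ∀ j, 0 ≤ ε * A k j

/-- Sign-coherence of `C`-matrices: for every skew-symmetrizable initial integer matrix and
every path, the associated `C`-matrix is column sign-coherent. -/
def SignCoherenceOfC : Prop :=
  ∀ (κ : Type) [Fintype κ] [DecidableEq κ], ∀ B : Matrix κ κ ℤ,
    IsSkewSymmetrizable B → ∀ p : List κ, ColSignCoherent (Cmat B p)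

/-- The principal extension `B̄ = [[B, -I],[I, O]]` of `B`, on the index type `Fin n ⊕ Fin n`. -/
def pext {n : ℕ} (B : Matrix (Fin n) (Fin n) ℤ) :
    Matrix (Fin n ⊕ Fin n) (Fin n ⊕ Fin n) ℤ :=
  Matrix.fromBlocks B (-1) 1 0

noncomputable section FPolys

/-- The ambient field of rational functions `ℚ(y_i : i ∈ ι)` (fraction field of `ℤ[y_i]`). -/
abbrev FField (ι : Type) := FractionRing (MvPolynomial ι ℤ)

/-- The variable `y_i` inside the fraction field. -/
def yvar (i : ι) : FField ι := algebraMap (MvPolynomial ι ℤ) (FField ι) (MvPolynomial.X i)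

/-- One mutation step for the triple `(B_t, C_t, (F_{j;t})_j)`. -/
def fpolyStep (s : Matrix ι ι ℤ × Matrix ι ι ℤ × (ι → FField ι)) (ℓ : ι) :
    Matrix ι ι ℤ × Matrix ι ι ℤ × (ι → FField ι) :=
  ⟨mutate s.1 ℓ,
   s.2.1 * (Jmat ℓ + rowSel ℓ (matPos s.1)) + colSel ℓ (matPos (-s.2.1)) * s.1,
   fun j => if j = ℓ then
     (s.2.2 ℓ)⁻¹ *
       ((∏ i, yvar i ^ (max (s.2.1 i ℓ) 0).toNat) * (∏ i, s.2.2 i ^ (max (s.1 i ℓ) 0).toNat)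
        + (∏ i, yvar i ^ (max (-(s.2.1 i ℓ)) 0).toNat) *
            (∏ i, s.2.2 i ^ (max (-(s.1 i ℓ)) 0).toNat))
   else s.2.2 j⟩

/-- The `F`-polynomial `F^{B;t_0}_{j;t}` (as an element of the field of rational functions)
at the end of the path `p`. -/
def Fpoly (B : Matrix ι ι ℤ) (p : List ι) : ι → FField ι :=
  (p.foldl fpolyStep ⟨B, 1, fun _ => 1⟩).2.2

/-- The polynomial representing an element of the fraction field (when it is a polynomial). -/
def polyOf (x : FField ι) : MvPolynomial ι ℤ := by
  classical exact
    if h : ∃ q : MvPolynomial ι ℤ, algebraMap (MvPolynomial ι ℤ) (FField ι) q = x then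
      h.choose else 0

/-- The `H`-matrix `H^{B;t_0}_t`: `h_{ij;t}` is the minimum over exponent vectors `a` in the
support of `F^{B;t_0}_{j;t}` of `-a_i + ∑_{l ≠ i} [-b_{il}]₊ a_l`. -/
def Hmat (B : Matrix ι ι ℤ) (p : List ι) : Matrix ι ι ℤ := fun i j =>
  if h : (polyOf (Fpoly B p j)).support.Nonempty then
    (polyOf (Fpoly B p j)).support.inf' h
      (fun a => -(a i : ℤ) + ∑ l ∈ Finset.univ.erase i, max (-(B i l)) 0 * (a l : ℤ))
  else 0

end FPolys

/-- The embedding `ℚ(y_1,…,y_n) → ℚ(y_1,…,y_{2n})` sending `y_i` to `y_i`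
(the second batch of variables indexed by the right summand). -/
noncomputable def embK (n : ℕ) : FField (Fin n) →+* FField (Fin n ⊕ Fin n) :=
  IsFractionRing.lift
    (g := (algebraMap (MvPolynomial (Fin n ⊕ Fin n) ℤ) (FField (Fin n ⊕ Fin n))).comp
      (MvPolynomial.rename (Sum.inl : Fin n → Fin n ⊕ Fin n)).toRingHom)
    (by
      intro a b hab
      simp only [RingHom.coe_comp, Function.comp_apply, AlgHom.toRingHom_eq_coe,
        RingHom.coe_coe] at hab
      exact MvPolynomial.rename_injective _ Sum.inl_injective
        (IsFractionRing.injective (MvPolynomial (Fin n ⊕ Fin n) ℤ)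
          (FField (Fin n ⊕ Fin n)) hab))

/-- `D⁻¹ Cᵀ D` over `ℚ`, for the positive diagonal skew-symmetrizer `D = diagonal d`. -/
noncomputable def dCd {n : ℕ} (d : Fin n → ℤ) (C : Matrix (Fin n) (Fin n) ℤ) :
    Matrix (Fin n) (Fin n) ℚ :=
  (Matrix.diagonal fun i => (d i : ℚ))⁻¹ * (C.map (Int.cast : ℤ → ℚ))ᵀ *
    Matrix.diagonal fun i => (d i : ℚ)

end Defs

/-! Restricted to the first `n` indices, the path in `B̄` is the path in `B`. Since `diag(D, D)`
skew-symmetrizes `B̄` and mutation preserves skew-symmetrizers, the top-right block of `B̄_t` is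
forced by the bottom-left one. The bottom rows obey the mutation rule of `C`-matrices, and the
bottom-right block stays zero: at a mutation in direction `k` its `(i, j)` entry changes by
`[c_ik]₊ x + c_ik [-x]₊` with `d_k x = -d_j c_jk`, which vanishes because `c_ik c_jk ≥ 0` by
sign-coherence. -/

section Mutation

variable {R : Type} [CommRing R] [LinearOrder R]

lemma mutate_submatrix {ι κ : Type} [DecidableEq ι] [DecidableEq κ] (M : Matrix ι ι R)
    {f : κ → ι} (hf : Function.Injective f) (k : κ) :
    (mutate M (f k)).submatrix f f = mutate (M.submatrix f f) k := by
  ext i j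
  simp only [mutate, submatrix_apply, hf.eq_iff]

variable [IsStrictOrderedRing R]

lemma max_mul_add_mul_max_neg_comm (c x : R) :
    max c 0 * x + c * max (-x) 0 = c * max x 0 + max (-c) 0 * x := by
  rcases le_total c 0 with hc | hc <;> rcases le_total x 0 with hx | hx <;> simp [hc, hx]

lemma max_mul_add_mul_max_neg_eq_zero {c x : R} (h : c * x ≤ 0) :
    max c 0 * x + c * max (-x) 0 = 0 := by
  rcases le_total c 0 with hc | hc <;> rcases le_total x 0 with hx | hx <;>
    simp [hc, hx] <;> exact mul_eq_zero.mp (by nlinarith)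

lemma mul_max_mul_add_mul_max_neg_skew {a b x y di dj dk : R} (hdi : 0 < di) (hdj : 0 < dj)
    (hdk : 0 < dk) (hax : di * a = -(dk * x)) (hby : dj * b = -(dk * y)) :
    di * (max a 0 * y + a * max (-y) 0) = -(dj * (max b 0 * x + b * max (-x) 0)) := by
  have hx : a ≤ 0 → 0 ≤ x := fun h => by nlinarith
  have hx' : 0 ≤ a → x ≤ 0 := fun h => by nlinarith
  have hy : b ≤ 0 → 0 ≤ y := fun h => by nlinarith
  have hy' : 0 ≤ b → y ≤ 0 := fun h => by nlinarith
  rcases le_total a 0 with ha | ha <;> rcases le_total b 0 with hb | hb <;>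
    simp [ha, hb, hx, hx', hy, hy'] <;> linear_combination y * hax - x * hby

end Mutation

section Paths

variable {ι R : Type} [Fintype ι] [DecidableEq ι] [CommRing R] [LinearOrder R]

lemma seedOf_append_singleton (B : Matrix ι ι R) (p : List ι) (ℓ : ι) :
    seedOf B (p ++ [ℓ]) = seedStep B (seedOf B p) ℓ := by
  simp [seedOf, List.foldl_append]

lemma Bpath_append_singleton (B : Matrix ι ι R) (p : List ι) (ℓ : ι) :
    Bpath B (p ++ [ℓ]) = mutate (Bpath B p) ℓ := by
  simp [Bpath, seedOf_append_singleton, seedStep]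

lemma Cmat_append_singleton_apply (B : Matrix ι ι R) (p : List ι) (ℓ i j : ι) :
    Cmat B (p ++ [ℓ]) i j =
      Cmat B p i j * (if j = ℓ then -1 else 1) + Cmat B p i ℓ * max (Bpath B p ℓ j) 0
        + max (-Cmat B p i ℓ) 0 * Bpath B p ℓ j := by
  simp only [Cmat, Bpath, seedOf_append_singleton, seedStep, Matrix.add_apply, Matrix.mul_add, Jmat,
    mul_apply, diagonal_apply, rowSel, colSel, matPos, Matrix.neg_apply, mul_ite, mul_zero, ite_mul,
    zero_mul, Finset.sum_ite_eq', Finset.mem_univ, if_true]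

lemma Bpath_map_submatrix {κ : Type} [Fintype κ] [DecidableEq κ] (M : Matrix ι ι R)
    {f : κ → ι} (hf : Function.Injective f) (p : List κ) :
    (Bpath M (p.map f)).submatrix f f = Bpath (M.submatrix f f) p := by
  induction p using List.reverseRecOn with
  | nil => rfl
  | append_singleton p k ih =>
    simp only [List.map_append, List.map_singleton, Bpath_append_singleton,
      mutate_submatrix _ hf, ih]

end Paths

section SkewSymmetrizer

variable {ι R : Type} [CommRing R]

def IsSkewSymmetrizer (d : ι → R) (M : Matrix ι ι R) : Prop :=
  ∀ i j, d i * M i j = -(d j * M j i)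

namespace IsSkewSymmetrizer

variable {d : ι → R} {M : Matrix ι ι R}

lemma of_transpose_eq_neg [Fintype ι] [DecidableEq ι]
    (h : (diagonal d * M)ᵀ = -(diagonal d * M)) : IsSkewSymmetrizer d M := fun i j => by
  simpa [diagonal_mul, eq_comm] using congrFun (congrFun h j) i

variable [LinearOrder R] [IsStrictOrderedRing R]

lemma apply_self_eq_zero (h : IsSkewSymmetrizer d M) (hd : ∀ i, 0 < d i) (i : ι) :
    M i i = 0 :=
  (mul_eq_zero.mp (by linarith [h i i] : d i * M i i = 0)).resolve_left (hd i).ne'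

lemma mutate [DecidableEq ι] (h : IsSkewSymmetrizer d M) (hd : ∀ i, 0 < d i) (k : ι) :
    IsSkewSymmetrizer d (mutate M k) := by
  intro i j
  by_cases hij : i = k ∨ j = k
  · simp only [_root_.mutate, hij, hij.symm, if_true]
    linarith [h i j]
  · have hji : ¬(j = k ∨ i = k) := by tauto
    simp only [_root_.mutate, if_neg hij, if_neg hji]
    linear_combination h i j +
      mul_max_mul_add_mul_max_neg_skew (hd i) (hd j) (hd k) (h i k) (h j k)

lemma Bpath [Fintype ι] [DecidableEq ι] (h : IsSkewSymmetrizer d M) (hd : ∀ i, 0 < d i)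
    (p : List ι) : IsSkewSymmetrizer d (Bpath M p) := by
  induction p using List.reverseRecOn with
  | nil => exact h
  | append_singleton p k ih => simpa only [Bpath_append_singleton] using ih.mutate hd k

end IsSkewSymmetrizer

end SkewSymmetrizer

lemma ColSignCoherent.mul_apply_nonneg {ι : Type} {A : Matrix ι ι ℤ} (h : ColSignCoherent A)
    (i j k : ι) : 0 ≤ A i k * A j k := by
  rcases (h k).2 with hk | hk
  · exact mul_nonneg (hk i) (hk j)
  · exact mul_nonneg_of_nonpos_of_nonpos (hk i) (hk j)

lemma dCd_apply {n : ℕ} {d : Fin n → ℤ} (hd : ∀ i, d i ≠ 0) (C : Matrix (Fin n) (Fin n) ℤ)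
    (i j : Fin n) : dCd d C i j = (d i : ℚ)⁻¹ * C j i * d j := by
  have hinv : (diagonal fun i => (d i : ℚ))⁻¹ = diagonal fun i => (d i : ℚ)⁻¹ :=
    inv_eq_right_inv (by simp [diagonal_mul_diagonal, hd])
  simp [dCd, hinv, diagonal_mul, mul_diagonal]

section PrincipalExtension

variable {n : ℕ} {B : Matrix (Fin n) (Fin n) ℤ} {d : Fin n → ℤ}

lemma IsSkewSymmetrizer.pext (hB : IsSkewSymmetrizer d B) :
    IsSkewSymmetrizer (Sum.elim d d) (pext B) := by
  rintro (i | i) (j | j)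
  · exact hB i j
  all_goals
    rcases eq_or_ne i j with rfl | hij
    · simp [_root_.pext]
    · simp [_root_.pext, one_apply, hij, hij.symm]

lemma Bpath_pext_inl_inl (p : List (Fin n)) (i j : Fin n) :
    Bpath (pext B) (p.map Sum.inl) (Sum.inl i) (Sum.inl j) = Bpath B p i j :=
  congrFun (congrFun (Bpath_map_submatrix (pext B) Sum.inl_injective p) i) j

lemma Bpath_pext_inr (hd : ∀ i, 0 < d i) (hB : IsSkewSymmetrizer d B)
    (hC : ∀ p, ColSignCoherent (Cmat B p)) (p : List (Fin n)) :
    (∀ i j, Bpath (pext B) (p.map Sum.inl) (Sum.inr i) (Sum.inl j) = Cmat B p i j) ∧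
      ∀ i j, Bpath (pext B) (p.map Sum.inl) (Sum.inr i) (Sum.inr j) = 0 := by
  induction p using List.reverseRecOn with
  | nil =>
    refine ⟨fun i j => ?_, fun i j => ?_⟩ <;> simp [_root_.pext, Bpath, seedOf, Cmat]
  | append_singleton p k ih =>
    obtain ⟨hBL, hBR⟩ := ih
    have hM := hB.pext.Bpath (Sum.rec hd hd) (p.map Sum.inl)
    simp only [List.map_append, List.map_singleton, Bpath_append_singleton]
    refine ⟨fun i j => ?_, fun i j => ?_⟩
    · rw [Cmat_append_singleton_apply]
      by_cases hj : j = k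
      · subst hj
        simp [_root_.mutate, hBL, (hB.Bpath hd p).apply_self_eq_zero hd]
      · simp only [_root_.mutate, reduceCtorEq, Sum.inl.injEq, hj, or_self, if_false, hBL,
          Bpath_pext_inl_inl, mul_one]
        rw [add_assoc, add_assoc, max_mul_add_mul_max_neg_comm]
    · simp only [_root_.mutate, reduceCtorEq, or_self, if_false, hBR, hBL, zero_add]
      have hx := hM (Sum.inl k) (Sum.inr j)
      simp only [Sum.elim_inl, Sum.elim_inr, hBL] at hx
      refine max_mul_add_mul_max_neg_eq_zero (nonpos_of_mul_nonpos_right ?_ (hd k))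
      calc _ = -(d j * (Cmat B p i k * Cmat B p j k)) := by
            linear_combination Cmat B p i k * hx
        _ ≤ 0 := neg_nonpos.2 (mul_nonneg (hd j).le ((hC p).mul_apply_nonneg i j k))

end PrincipalExtension

/-- block form of the mutated principal extension (with sign-coherence). -/
theorem pext_Bpath_block_of_signCoherence (hsc : SignCoherenceOfC) {n : ℕ}
    (B : Matrix (Fin n) (Fin n) ℤ) (d : Fin n → ℤ) (hd : ∀ i, 0 < d i)
    (hskew : (Matrix.diagonal d * B)ᵀ = -(Matrix.diagonal d * B)) (p : List (Fin n)) :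
    (Bpath (pext B) (p.map Sum.inl)).map ((↑) : ℤ → ℚ) =
      Matrix.fromBlocks ((Bpath B p).map ((↑) : ℤ → ℚ)) (-dCd d (Cmat B p))
        ((Cmat B p).map ((↑) : ℤ → ℚ)) 0 := by
  have hB := IsSkewSymmetrizer.of_transpose_eq_neg hskew
  obtain ⟨hBL, hBR⟩ := Bpath_pext_inr hd hB (hsc _ B ⟨d, hd, hskew⟩) p
  ext (i | i) (j | j)
  · simp [Bpath_pext_inl_inl]
  · have hTR := hB.pext.Bpath (Sum.rec hd hd) (p.map Sum.inl) (Sum.inl i) (Sum.inr j)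
    simp only [Sum.elim_inl, Sum.elim_inr, hBL] at hTR
    have hdi : (d i : ℚ) ≠ 0 := by exact_mod_cast (hd i).ne'
    rw [map_apply, fromBlocks_apply₁₂, neg_apply, dCd_apply fun i => (hd i).ne']
    field_simp
    exact_mod_cast (by linear_combination hTR)
  · simp [hBL]
  · simp [hBR]
end

section
/- Let B be a skew-symmetrizable n×n integer matrix and let t be reached from t_0 by a path with all directions in {1,…,n}. Then the 2n×2n G-matrix of the principal extension is block diagonal: G^{B̄;t_0}_t = [[G^{B;t_0}_t, O], [O, I_n]]. -/
/-!
Along a path in the principal directions the seed of `B̄` keeps a block shape: its exchange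
matrix is `[[B_t, *], [C_t, *]]`, its `C`-matrix `[[C_t, *], [O, *]]` and its `G`-matrix
`[[G_t, O], [O, I]]`. One mutation step preserves this shape by block multiplication; the only
input beyond that is `b_{ℓℓ;t} = 0`, which makes the lower-left block of `μ_ℓ(B̄_t)` follow the
`C`-matrix recursion, and which holds because mutation preserves skew-symmetrizability.
-/

open Matrix

section SelectorAlgebra

variable {m R : Type} [CommRing R]

@[simp]
lemma matPos_zero [LinearOrder R] : matPos (0 : Matrix m m R) = 0 := by
  ext i j
  simp [matPos]

@[simp]
lemma colSel_zero [DecidableEq m] (k : m) : colSel k (0 : Matrix m m R) = 0 := by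
  ext i j
  simp [colSel]

lemma mul_Jmat_apply [Fintype m] [DecidableEq m] (M : Matrix m m R) (ℓ i j : m) :
    (M * (Jmat ℓ : Matrix m m R)) i j = M i j * (if j = ℓ then -1 else 1) := by
  simp [Jmat, mul_diagonal]

lemma mul_rowSel_apply [Fintype m] [DecidableEq m] (M N : Matrix m m R) (k i j : m) :
    (M * rowSel k N) i j = M i k * N k j := by
  simp [mul_apply, rowSel]

lemma colSel_mul_apply [Fintype m] [DecidableEq m] (M N : Matrix m m R) (k i j : m) :
    (colSel k N * M) i j = N i k * M k j := by
  simp [mul_apply, colSel]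

lemma matPos_fromBlocks [LinearOrder R] (A B C D : Matrix m m R) :
    matPos (fromBlocks A B C D) = fromBlocks (matPos A) (matPos B) (matPos C) (matPos D) := by
  ext (i | i) (j | j) <;> rfl

lemma colSel_inl_fromBlocks [DecidableEq m] (ℓ : m) (A B C D : Matrix m m R) :
    colSel (Sum.inl ℓ) (fromBlocks A B C D) = fromBlocks (colSel ℓ A) 0 (colSel ℓ C) 0 := by
  ext (i | i) (j | j) <;> simp [colSel]

lemma rowSel_inl_fromBlocks [DecidableEq m] (ℓ : m) (A B C D : Matrix m m R) :
    rowSel (Sum.inl ℓ) (fromBlocks A B C D) = fromBlocks (rowSel ℓ A) (rowSel ℓ B) 0 0 := by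
  ext (i | i) (j | j) <;> simp [rowSel]

lemma Jmat_inl [DecidableEq m] (ℓ : m) :
    (Jmat (Sum.inl ℓ) : Matrix (m ⊕ m) (m ⊕ m) R) = fromBlocks (Jmat ℓ) 0 0 1 := by
  ext (i | i) (j | j) <;> simp [Jmat, one_apply, diagonal_apply]

lemma max_mul_add_mul_max_neg [LinearOrder R] [IsStrictOrderedRing R] (x b : R) :
    max x 0 * b + x * max (-b) 0 = x * max b 0 + max (-x) 0 * b := by
  rcases le_total x 0 with hx | hx <;> rcases le_total b 0 with hb | hb <;> simp [hx, hb]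

lemma mutate_inl_fromBlocks [Fintype m] [DecidableEq m] [LinearOrder R] [IsStrictOrderedRing R]
    {A C : Matrix m m R} {ℓ : m} (hA : A ℓ ℓ = 0) (X Y : Matrix m m R) :
    ∃ X' Y', mutate (fromBlocks A X C Y) (Sum.inl ℓ) =
      fromBlocks (mutate A ℓ) X' (C * (Jmat ℓ + rowSel ℓ (matPos A)) + colSel ℓ (matPos (-C)) * A)
        Y' := by
  refine ⟨(mutate (fromBlocks A X C Y) (Sum.inl ℓ)).toBlocks₁₂,
    (mutate (fromBlocks A X C Y) (Sum.inl ℓ)).toBlocks₂₂, ?_⟩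
  ext (i | i) (j | j)
  · simp [mutate]
  · rfl
  · rw [fromBlocks_apply₂₁, Matrix.add_apply, mul_add, Matrix.add_apply, mul_Jmat_apply,
      mul_rowSel_apply, colSel_mul_apply]
    by_cases hj : j = ℓ
    · subst hj
      simp [mutate, matPos, hA]
    · have hswap := max_mul_add_mul_max_neg (C i ℓ) (A ℓ j)
      simp only [mutate, matPos, Matrix.neg_apply, fromBlocks_apply₂₁, fromBlocks_apply₁₁,
        reduceCtorEq, Sum.inl.injEq, hj, false_or, if_false]
      linear_combination hswap
  · rfl

end SelectorAlgebra

section SkewSymmetrizable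

variable {ι : Type} [Fintype ι] [DecidableEq ι]

lemma isSkewSymmetrizable_iff (B : Matrix ι ι ℤ) :
    IsSkewSymmetrizable B ↔ ∃ d : ι → ℤ, (∀ i, 0 < d i) ∧ ∀ i j, d i * B i j = -(d j * B j i) := by
  refine exists_congr fun d => and_congr_right fun _ => ?_
  simp only [← Matrix.ext_iff, transpose_apply, Matrix.neg_apply, diagonal_mul]
  exact forall_comm

lemma IsSkewSymmetrizable.apply_self {B : Matrix ι ι ℤ} (hB : IsSkewSymmetrizable B) (i : ι) :
    B i i = 0 := by
  obtain ⟨d, hd, h⟩ := (isSkewSymmetrizable_iff B).1 hB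
  have hdiag : d i * B i i = 0 := by linarith [h i i]
  exact (mul_eq_zero.1 hdiag).resolve_left (hd i).ne'

lemma IsSkewSymmetrizable.mutate {B : Matrix ι ι ℤ} (hB : IsSkewSymmetrizable B) (k : ι) :
    IsSkewSymmetrizable (mutate B k) := by
  obtain ⟨d, hd, h⟩ := (isSkewSymmetrizable_iff B).1 hB
  refine (isSkewSymmetrizable_iff _).2 ⟨d, hd, fun i j => ?_⟩
  have cross : ∀ i j, d i * (max (B i k) 0 * B k j) = -(d j * (B j k * max (-B k i) 0)) := by
    intro i j
    have hpos : d i * max (B i k) 0 = d k * max (-B k i) 0 := by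
      rw [mul_max_of_nonneg _ _ (hd i).le, mul_max_of_nonneg _ _ (hd k).le, h i k]
      ring_nf
    calc d i * (max (B i k) 0 * B k j) = max (-B k i) 0 * (d k * B k j) := by
          rw [← mul_assoc, hpos]; ring
      _ = -(d j * (B j k * max (-B k i) 0)) := by rw [h k j]; ring
  unfold _root_.mutate
  by_cases hk : i = k ∨ j = k
  · rw [if_pos hk, if_pos hk.symm]
    linarith [h i j]
  · rw [if_neg hk, if_neg (by tauto)]
    linarith [h i j, cross i j, cross j i]

end SkewSymmetrizable

section PrincipalExtension

variable {m R : Type} [Fintype m] [DecidableEq m] [CommRing R] [LinearOrder R]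

def SeedData.IsExtensionOf (t : SeedData (m ⊕ m) R) (s : SeedData m R) : Prop :=
  (∃ X Y, t.B = fromBlocks s.B X s.C Y) ∧ (∃ X Y, t.C = fromBlocks s.C X 0 Y) ∧
    t.G = fromBlocks s.G 0 0 1

lemma SeedData.IsExtensionOf.seedStep_inl [IsStrictOrderedRing R] {t : SeedData (m ⊕ m) R}
    {s : SeedData m R} (h : t.IsExtensionOf s) {ℓ : m} (hℓ : s.B ℓ ℓ = 0) (B0 U W : Matrix m m R) :
    (seedStep (fromBlocks B0 U 1 W) t (Sum.inl ℓ)).IsExtensionOf (seedStep B0 s ℓ) := by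
  obtain ⟨⟨X, Y, hB⟩, ⟨X', Y', hC⟩, hG⟩ := h
  refine ⟨?_, ?_, ?_⟩
  · simpa only [seedStep, hB] using mutate_inl_fromBlocks hℓ X Y
  · simp only [seedStep, hB, hC, Jmat_inl, rowSel_inl_fromBlocks, colSel_inl_fromBlocks,
      matPos_fromBlocks, fromBlocks_neg, fromBlocks_add, fromBlocks_multiply]
    exact ⟨_, _, fromBlocks_inj.2 ⟨by simp, rfl, by simp, rfl⟩⟩
  · simp only [seedStep, hB, hC, hG, Jmat_inl, rowSel_inl_fromBlocks, colSel_inl_fromBlocks,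
      matPos_fromBlocks, fromBlocks_neg, fromBlocks_add, fromBlocks_multiply, sub_eq_add_neg]
    simp

lemma SeedData.IsExtensionOf.foldl {t : SeedData (m ⊕ m) ℤ} {s : SeedData m ℤ}
    (h : t.IsExtensionOf s) (hs : IsSkewSymmetrizable s.B) (B0 U W : Matrix m m ℤ) (p : List m) :
    ((p.map Sum.inl).foldl (seedStep (fromBlocks B0 U 1 W)) t).IsExtensionOf
      (p.foldl (seedStep B0) s) := by
  induction p generalizing s t with
  | nil => exact h
  | cons ℓ p ih => exact ih (h.seedStep_inl (hs.apply_self ℓ) B0 U W) (hs.mutate ℓ)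

lemma seedOf_fromBlocks_map_inl_isExtensionOf {B : Matrix m m ℤ} (hB : IsSkewSymmetrizable B)
    (U W : Matrix m m ℤ) (p : List m) :
    (seedOf (fromBlocks B U 1 W) (p.map Sum.inl)).IsExtensionOf (seedOf B p) :=
  SeedData.IsExtensionOf.foldl ⟨⟨U, W, rfl⟩, ⟨0, 1, fromBlocks_one.symm⟩, fromBlocks_one.symm⟩
    hB B U W p

end PrincipalExtension

/-- the `G`-matrix of the principal extension is block diagonal. -/
theorem pext_Gmat_blockDiagonal {n : ℕ}
    (B : Matrix (Fin n) (Fin n) ℤ) (hB : IsSkewSymmetrizable B) (p : List (Fin n)) :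
    Gmat (pext B) (p.map Sum.inl) = Matrix.fromBlocks (Gmat B p) 0 0 1 :=
  (seedOf_fromBlocks_map_inl_isExtensionOf hB (-1) 0 p).2.2
end

section
/- Let B be a skew-symmetrizable n×n integer matrix and let t be reached from t_0 by a path with all directions in {1,…,n}. Then the 2n×2n F-matrix of the principal extension satisfies F^{B̄;t_0}_t = [[F^{B;t_0}_t, O], [O, O]]. -/
open Matrix

/-!
In a direction `inl ℓ` of `ι ⊕ κ`, the mutation rules for `B`, `C` and `F` read only the
top-left block of `B` and the left block column of `C`, and they keep the lower-left block of `C`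
zero (its upper-right and lower-right blocks never enter). So along a path in `ι` the top-left
blocks of `B_t` and `C_t` mutate exactly like the seeds of the top-left block `B` of `B̄`, while
the `F`-matrix, starting from `0`, acquires entries only in its top-left block, where it follows
`F^{B;t₀}_t`.
-/

open Sum

section BlockRestriction

variable {ι κ R : Type} [DecidableEq ι] [DecidableEq κ] [CommRing R] [LinearOrder R]

lemma toBlocks₁₁_mutate_inl (B : Matrix (ι ⊕ κ) (ι ⊕ κ) R) (ℓ : ι) :
    (mutate B (inl ℓ)).toBlocks₁₁ = mutate B.toBlocks₁₁ ℓ := by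
  ext i j
  simp [mutate, toBlocks₁₁]

variable [Fintype ι] [Fintype κ]

lemma toBlocks₁₁_Cmutation_inl (B C : Matrix (ι ⊕ κ) (ι ⊕ κ) R) (ℓ : ι) :
    (C * (Jmat (inl ℓ) + rowSel (inl ℓ) (matPos B)) + colSel (inl ℓ) (matPos (-C)) * B).toBlocks₁₁
      = C.toBlocks₁₁ * (Jmat ℓ + rowSel ℓ (matPos B.toBlocks₁₁))
        + colSel ℓ (matPos (-C.toBlocks₁₁)) * B.toBlocks₁₁ := by
  ext i j
  simp [toBlocks₁₁, mul_apply, Fintype.sum_sum_type, Jmat, diagonal_apply, rowSel, colSel,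
    matPos]

lemma toBlocks₂₁_Cmutation_inl {B C : Matrix (ι ⊕ κ) (ι ⊕ κ) R} (hC : C.toBlocks₂₁ = 0)
    (ℓ : ι) :
    (C * (Jmat (inl ℓ) + rowSel (inl ℓ) (matPos B)) + colSel (inl ℓ) (matPos (-C)) * B).toBlocks₂₁
      = 0 := by
  ext i j
  have hC' : ∀ k, C (inr i) (inl k) = 0 := fun k => congrFun (congrFun hC i) k
  simp [toBlocks₂₁, mul_apply, Fintype.sum_sum_type, Jmat, rowSel, colSel, matPos, hC']

lemma Fmutation_fromBlocks_inl {B C : Matrix (ι ⊕ κ) (ι ⊕ κ) R} (hC : C.toBlocks₂₁ = 0)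
    (F : Matrix ι ι R) (ℓ : ι) :
    fromBlocks F 0 0 0 * Jmat (inl ℓ)
        + emax (colSel (inl ℓ) (matPos C) + fromBlocks F 0 0 0 * colSel (inl ℓ) (matPos B))
          (colSel (inl ℓ) (matPos (-C)) + fromBlocks F 0 0 0 * colSel (inl ℓ) (matPos (-B)))
      = fromBlocks
          (F * Jmat ℓ + emax (colSel ℓ (matPos C.toBlocks₁₁) + F * colSel ℓ (matPos B.toBlocks₁₁))
            (colSel ℓ (matPos (-C.toBlocks₁₁)) + F * colSel ℓ (matPos (-B.toBlocks₁₁)))) 0 0 0 := by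
  have hC' : ∀ i k, C (inr i) (inl k) = 0 := fun i k => congrFun (congrFun hC i) k
  ext (i | i) (j | j) <;>
    simp [toBlocks₁₁, mul_apply, Fintype.sum_sum_type, Jmat, diagonal_apply, colSel, matPos,
      emax, hC']

structure SeedData.IsBlockExtension (s : SeedData ι R) (t : SeedData (ι ⊕ κ) R) : Prop where
  B_toBlocks₁₁ : t.B.toBlocks₁₁ = s.B
  C_toBlocks₁₁ : t.C.toBlocks₁₁ = s.C
  C_toBlocks₂₁ : t.C.toBlocks₂₁ = 0
  F_eq_fromBlocks : t.F = fromBlocks s.F 0 0 0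

namespace SeedData.IsBlockExtension

variable {s : SeedData ι R} {t : SeedData (ι ⊕ κ) R}

lemma seedStep_inl (h : s.IsBlockExtension t) (B₀ : Matrix ι ι R)
    (B₀' : Matrix (ι ⊕ κ) (ι ⊕ κ) R) (ℓ : ι) :
    (seedStep B₀ s ℓ).IsBlockExtension (seedStep B₀' t (inl ℓ)) where
  B_toBlocks₁₁ := by rw [seedStep, toBlocks₁₁_mutate_inl, h.B_toBlocks₁₁]; rfl
  C_toBlocks₁₁ := by
    rw [seedStep, toBlocks₁₁_Cmutation_inl, h.B_toBlocks₁₁, h.C_toBlocks₁₁]; rfl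
  C_toBlocks₂₁ := toBlocks₂₁_Cmutation_inl h.C_toBlocks₂₁ ℓ
  F_eq_fromBlocks := by
    rw [seedStep, h.F_eq_fromBlocks, Fmutation_fromBlocks_inl h.C_toBlocks₂₁, h.B_toBlocks₁₁,
      h.C_toBlocks₁₁]; rfl

lemma foldl_seedStep (h : s.IsBlockExtension t) (B₀ : Matrix ι ι R)
    (B₀' : Matrix (ι ⊕ κ) (ι ⊕ κ) R) (p : List ι) :
    (p.foldl (seedStep B₀) s).IsBlockExtension
      ((p.map inl).foldl (seedStep B₀') t) := by
  induction p generalizing s t with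
  | nil => exact h
  | cons ℓ p ih => exact ih (h.seedStep_inl B₀ B₀' ℓ)

end SeedData.IsBlockExtension

lemma Fmat_map_inl {B : Matrix ι ι R} {B' : Matrix (ι ⊕ κ) (ι ⊕ κ) R} (hB : B'.toBlocks₁₁ = B)
    (p : List ι) : Fmat B' (p.map inl) = fromBlocks (Fmat B p) 0 0 0 :=
  have init : (⟨B, 1, 1, 0⟩ : SeedData ι R).IsBlockExtension ⟨B', 1, 1, 0⟩ :=
    ⟨hB, by rw [← fromBlocks_one]; rfl, by rw [← fromBlocks_one]; rfl, by simp⟩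
  (init.foldl_seedStep B B' p).F_eq_fromBlocks

end BlockRestriction

theorem pext_Fmat_block_general {n : ℕ}
    (B : Matrix (Fin n) (Fin n) ℤ) (p : List (Fin n)) :
    Fmat (pext B) (p.map Sum.inl) = Matrix.fromBlocks (Fmat B p) 0 0 0 :=
  Fmat_map_inl (toBlocks_fromBlocks₁₁ _ _ _ _) p

/-- the `F`-matrix of the principal extension is concentrated in the
upper-left block. -/
theorem pext_Fmat_block {n : ℕ}
    (B : Matrix (Fin n) (Fin n) ℤ) (hB : IsSkewSymmetrizable B) (p : List (Fin n)) :
    Fmat (pext B) (p.map Sum.inl) = Matrix.fromBlocks (Fmat B p) 0 0 0 :=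
  pext_Fmat_block_general B p
end

section
/- Let B be a skew-symmetrizable n×n integer matrix and let t be reached from t_0 by a path with all directions in {1,…,n}. Then the 2n×2n H-matrix of the principal extension satisfies H^{B̄;t_0}_t = [[H^{B;t_0}_t, O], [O, O]]. -/
open Matrix

/-!
Along directions in the first block, the `C`-matrix of `B̄` keeps a zero lower-left block and
upper-left block `C^{B;t_0}_t`, so the `F`-polynomial recursion for `B̄` is the image of the one
for `B` under `y_i ↦ y_i`, while the `F`-polynomials of the last `n` directions stay `1`. The
support of `F^{B̄}_{j;t}` is therefore that of `F^{B}_{j;t}` padded with zeros: on it the `i`-th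
functional of `H` agrees with the one for `B` when `i ≤ n`, and vanishes when `i > n` because
the lower-left block of `B̄` is nonnegative.
-/

open MvPolynomial Sum

section FractionField

lemma embK_algebraMap {n : ℕ} (q : MvPolynomial (Fin n) ℤ) :
    embK n (algebraMap _ (FField (Fin n)) q) =
      algebraMap _ (FField (Fin n ⊕ Fin n)) (rename (inl : Fin n → Fin n ⊕ Fin n) q) :=
  IsFractionRing.lift_algebraMap _ q

lemma embK_yvar {n : ℕ} (i : Fin n) : embK n (yvar i) = yvar (inl i) := by
  rw [yvar, embK_algebraMap, rename_X, yvar]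

lemma polyOf_algebraMap {ι : Type} (q : MvPolynomial ι ℤ) :
    polyOf (algebraMap _ (FField ι) q) = q := by
  have h : ∃ r, algebraMap (MvPolynomial ι ℤ) (FField ι) r = algebraMap _ _ q := ⟨q, rfl⟩
  rw [polyOf, dif_pos h]
  exact IsFractionRing.injective _ (FField ι) h.choose_spec

lemma polyOf_one {ι : Type} : polyOf (1 : FField ι) = 1 := by
  rw [← map_one (algebraMap (MvPolynomial ι ℤ) (FField ι)), polyOf_algebraMap]

lemma polyOf_of_notMem_range {ι : Type} {x : FField ι}
    (hx : x ∉ Set.range (algebraMap (MvPolynomial ι ℤ) (FField ι))) : polyOf x = 0 :=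
  dif_neg hx

lemma mem_range_of_embK_mem_range {n : ℕ} {x : FField (Fin n)}
    (h : embK n x ∈ Set.range (algebraMap (MvPolynomial (Fin n ⊕ Fin n) ℤ) _)) :
    x ∈ Set.range (algebraMap (MvPolynomial (Fin n) ℤ) (FField (Fin n))) := by
  obtain ⟨q, hq⟩ := h
  obtain ⟨a, b, hb, rfl⟩ := IsFractionRing.div_surjective (A := MvPolynomial (Fin n) ℤ) x
  have hbK : algebraMap _ (FField (Fin n)) b ≠ 0 :=
    IsFractionRing.to_map_ne_zero_of_mem_nonZeroDivisors hb
  have hb' : algebraMap _ (FField (Fin n ⊕ Fin n)) (rename (inl : _ → Fin n ⊕ Fin n) b) ≠ 0 :=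
    (map_ne_zero_iff _ (IsFractionRing.injective _ _)).2
      ((map_ne_zero_iff _ (rename_injective _ inl_injective)).2 (nonZeroDivisors.ne_zero hb))
  have hqb : q * rename inl b = rename inl a :=
    IsFractionRing.injective _ (FField (Fin n ⊕ Fin n)) (by
      rw [map_mul, hq, map_div₀, embK_algebraMap, embK_algebraMap, div_mul_cancel₀ _ hb'])
  -- `killCompl` is a left inverse of `rename inl`, so `q * b̄ = ā` descends to `ℤ[y_1, …, y_n]`
  have hab : killCompl inl_injective q * b = a := by
    simpa using congrArg (killCompl inl_injective) hqb
  exact ⟨killCompl inl_injective q, by rw [← hab, map_mul, mul_div_cancel_right₀ _ hbK]⟩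

lemma polyOf_embK {n : ℕ} (x : FField (Fin n)) :
    polyOf (embK n x) = rename inl (polyOf x) := by
  by_cases hx : x ∈ Set.range (algebraMap (MvPolynomial (Fin n) ℤ) (FField (Fin n)))
  · obtain ⟨q, rfl⟩ := hx
    rw [embK_algebraMap, polyOf_algebraMap, polyOf_algebraMap]
  · rw [polyOf_of_notMem_range hx, polyOf_of_notMem_range (mt mem_range_of_embK_mem_range hx),
      map_zero]

end FractionField

section Extension

lemma fpolyStep_C_apply {ι : Type} [Fintype ι] [DecidableEq ι]
    (s : Matrix ι ι ℤ × Matrix ι ι ℤ × (ι → FField ι)) (ℓ r j : ι) :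
    (fpolyStep s ℓ).2.1 r j = (if j = ℓ then -s.2.1 r j else s.2.1 r j)
      + s.2.1 r ℓ * max (s.1 ℓ j) 0 + max (-s.2.1 r ℓ) 0 * s.1 ℓ j := by
  simp only [fpolyStep, Matrix.add_apply, Matrix.mul_apply, Jmat, rowSel, colSel, matPos,
    Matrix.diagonal_apply, Matrix.neg_apply, mul_add, mul_ite, mul_zero,
    ite_mul, zero_mul, Finset.sum_ite_eq', Finset.mem_univ, if_true]
  split_ifs <;> simp_all

variable {n : ℕ}

lemma prod_pow_eq_embK {G : Fin n ⊕ Fin n → FField (Fin n ⊕ Fin n)} {g : Fin n → FField (Fin n)}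
    (e : Fin n ⊕ Fin n → ℕ) (hinl : ∀ i, G (inl i) = embK n (g i))
    (hinr : ∀ i, G (inr i) ^ e (inr i) = 1) :
    ∏ i, G i ^ e i = embK n (∏ i, g i ^ e (inl i)) := by
  simp [Fintype.prod_sum_type, hinl, hinr, map_prod, map_pow]

/-- The other blocks of `t.1` are not tracked: they only enter the `F`-recursion as exponents
of `t.2.2 (inr i) = 1`. -/
structure ExtendsFpolyState
    (s : Matrix (Fin n) (Fin n) ℤ × Matrix (Fin n) (Fin n) ℤ × (Fin n → FField (Fin n)))
    (t : Matrix (Fin n ⊕ Fin n) (Fin n ⊕ Fin n) ℤ × Matrix (Fin n ⊕ Fin n) (Fin n ⊕ Fin n) ℤ ×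
      (Fin n ⊕ Fin n → FField (Fin n ⊕ Fin n))) : Prop where
  B_inl_inl : ∀ i j, t.1 (inl i) (inl j) = s.1 i j
  C_inl_inl : ∀ i j, t.2.1 (inl i) (inl j) = s.2.1 i j
  C_inr_inl : ∀ i j, t.2.1 (inr i) (inl j) = 0
  F_inl : ∀ j, t.2.2 (inl j) = embK n (s.2.2 j)
  F_inr : ∀ j, t.2.2 (inr j) = 1

namespace ExtendsFpolyState

variable {s : Matrix (Fin n) (Fin n) ℤ × Matrix (Fin n) (Fin n) ℤ × (Fin n → FField (Fin n))}
  {t : Matrix (Fin n ⊕ Fin n) (Fin n ⊕ Fin n) ℤ × Matrix (Fin n ⊕ Fin n) (Fin n ⊕ Fin n) ℤ ×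
    (Fin n ⊕ Fin n → FField (Fin n ⊕ Fin n))}

lemma fpolyStep_F_inl (h : ExtendsFpolyState s t) (ℓ : Fin n) :
    (fpolyStep t (inl ℓ)).2.2 (inl ℓ) = embK n ((fpolyStep s ℓ).2.2 ℓ) := by
  simp only [fpolyStep, if_true, map_mul, map_inv₀, map_add, h.F_inl]
  rw [prod_pow_eq_embK _ (fun i => (embK_yvar i).symm),
    prod_pow_eq_embK _ (fun i => (embK_yvar i).symm), prod_pow_eq_embK _ h.F_inl,
    prod_pow_eq_embK _ h.F_inl]
  · simp only [h.B_inl_inl, h.C_inl_inl]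
  all_goals intro i; simp [h.C_inr_inl, h.F_inr]

lemma step (h : ExtendsFpolyState s t) (ℓ : Fin n) :
    ExtendsFpolyState (fpolyStep s ℓ) (fpolyStep t (inl ℓ)) where
  B_inl_inl i j := by simp only [fpolyStep, mutate, inl.injEq, h.B_inl_inl]
  C_inl_inl i j := by simp only [fpolyStep_C_apply, inl.injEq, h.B_inl_inl, h.C_inl_inl]
  C_inr_inl i j := by simp [fpolyStep_C_apply, h.C_inr_inl]
  F_inl j := by
    by_cases hj : j = ℓ
    · subst hj; exact h.fpolyStep_F_inl j
    · simp [fpolyStep, hj, h.F_inl]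
  F_inr j := by simp [fpolyStep, h.F_inr]

lemma foldl (h : ExtendsFpolyState s t) (p : List (Fin n)) :
    ExtendsFpolyState (p.foldl fpolyStep s) ((p.map inl).foldl fpolyStep t) := by
  induction p generalizing s t with
  | nil => exact h
  | cons ℓ p ih => exact ih (h.step ℓ)

lemma init {B : Matrix (Fin n) (Fin n) ℤ} {M : Matrix (Fin n ⊕ Fin n) (Fin n ⊕ Fin n) ℤ}
    (hM : M.toBlocks₁₁ = B) :
    ExtendsFpolyState (B, 1, fun _ => 1) (M, 1, fun _ => 1) where
  B_inl_inl i j := congrFun₂ hM i j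
  C_inl_inl i j := by simp [Matrix.one_apply]
  C_inr_inl i j := by simp
  F_inl j := (map_one _).symm
  F_inr _ := rfl

end ExtendsFpolyState

variable {n : ℕ} {B : Matrix (Fin n) (Fin n) ℤ} {M : Matrix (Fin n ⊕ Fin n) (Fin n ⊕ Fin n) ℤ}

lemma Fpoly_map_inl_inl (hM : M.toBlocks₁₁ = B) (p : List (Fin n)) (j : Fin n) :
    Fpoly M (p.map inl) (inl j) = embK n (Fpoly B p j) :=
  ((ExtendsFpolyState.init hM).foldl p).F_inl j

lemma Fpoly_map_inl_inr (hM : M.toBlocks₁₁ = B) (p : List (Fin n)) (j : Fin n) :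
    Fpoly M (p.map inl) (inr j) = 1 :=
  ((ExtendsFpolyState.init hM).foldl p).F_inr j

end Extension

section HMatrix

def hFunctional {ι : Type} [Fintype ι] [DecidableEq ι] (B : Matrix ι ι ℤ) (i : ι)
    (a : ι →₀ ℕ) : ℤ :=
  -(a i : ℤ) + ∑ l ∈ Finset.univ.erase i, max (-(B i l)) 0 * (a l : ℤ)

def minOnSupport {σ : Type} (q : MvPolynomial σ ℤ) (f : (σ →₀ ℕ) → ℤ) : ℤ :=
  if h : q.support.Nonempty then q.support.inf' h f else 0

lemma Hmat_apply {ι : Type} [Fintype ι] [DecidableEq ι] (B : Matrix ι ι ℤ) (p : List ι)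
    (i j : ι) : Hmat B p i j = minOnSupport (polyOf (Fpoly B p j)) (hFunctional B i) :=
  rfl

lemma minOnSupport_one {σ : Type} (f : (σ →₀ ℕ) → ℤ) : minOnSupport 1 f = f 0 := by
  simp [minOnSupport, support_one]

lemma minOnSupport_const_zero {σ : Type} (q : MvPolynomial σ ℤ) :
    minOnSupport q (fun _ => 0) = 0 := by
  unfold minOnSupport
  split_ifs with h
  · exact Finset.inf'_const h 0
  · rfl

lemma minOnSupport_rename {σ τ : Type} {g : σ → τ} (hg : Function.Injective g)
    (q : MvPolynomial σ ℤ) (f : (τ →₀ ℕ) → ℤ) :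
    minOnSupport (rename g q) f = minOnSupport q (f ∘ Finsupp.mapDomain g) := by
  classical
  simp only [minOnSupport, support_rename_of_injective hg, Finset.image_nonempty]
  split_ifs with h
  · exact Finset.inf'_image ..
  · rfl

lemma mapDomain_inl_inr {ι κ : Type} (a : ι →₀ ℕ) (k : κ) :
    Finsupp.mapDomain inl a (inr k) = 0 :=
  Finsupp.mapDomain_of_notMem_range _ _ (by simp)

lemma hFunctional_zero {ι : Type} [Fintype ι] [DecidableEq ι] (B : Matrix ι ι ℤ) (i : ι) :
    hFunctional B i 0 = 0 := by
  simp [hFunctional]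

variable {ι κ : Type} [Fintype ι] [DecidableEq ι] [Fintype κ] [DecidableEq κ]
  {B : Matrix ι ι ℤ} {M : Matrix (ι ⊕ κ) (ι ⊕ κ) ℤ}

lemma hFunctional_inl_mapDomain_inl (hM : M.toBlocks₁₁ = B) (i : ι) (a : ι →₀ ℕ) :
    hFunctional M (inl i) (Finsupp.mapDomain inl a) = hFunctional B i a := by
  subst hM
  simp [hFunctional, Finset.sum_erase_eq_sub, Fintype.sum_sum_type, mapDomain_inl_inr,
    Finsupp.mapDomain_apply inl_injective, Matrix.toBlocks₁₁]

lemma hFunctional_inr_mapDomain_inl (hM : ∀ k i, 0 ≤ M (inr k) (inl i)) (k : κ) (a : ι →₀ ℕ) :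
    hFunctional M (inr k) (Finsupp.mapDomain inl a) = 0 := by
  rw [hFunctional, mapDomain_inl_inr, Nat.cast_zero, neg_zero, zero_add]
  refine Finset.sum_eq_zero fun l _ => ?_
  rcases l with i | k'
  · simp [hM k i]
  · simp [mapDomain_inl_inr]

end HMatrix

theorem Hmat_map_inl {n : ℕ} {B : Matrix (Fin n) (Fin n) ℤ}
    {M : Matrix (Fin n ⊕ Fin n) (Fin n ⊕ Fin n) ℤ} (hM₁₁ : M.toBlocks₁₁ = B)
    (hM₂₁ : ∀ k i, 0 ≤ M (inr k) (inl i)) (p : List (Fin n)) :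
    Hmat M (p.map inl) = Matrix.fromBlocks (Hmat B p) 0 0 0 := by
  ext (i | k) (j | j)
  · rw [Hmat_apply, Fpoly_map_inl_inl hM₁₁, polyOf_embK, minOnSupport_rename inl_injective]
    simp [Function.comp_def, hFunctional_inl_mapDomain_inl hM₁₁, Hmat_apply]
  · simp [Hmat_apply, Fpoly_map_inl_inr hM₁₁, polyOf_one, minOnSupport_one, hFunctional_zero]
  · rw [Hmat_apply, Fpoly_map_inl_inl hM₁₁, polyOf_embK, minOnSupport_rename inl_injective]
    simp [Function.comp_def, hFunctional_inr_mapDomain_inl hM₂₁, minOnSupport_const_zero]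
  · simp [Hmat_apply, Fpoly_map_inl_inr hM₁₁, polyOf_one, minOnSupport_one, hFunctional_zero]

theorem pext_Hmat_block_general {n : ℕ}
    (B : Matrix (Fin n) (Fin n) ℤ) (p : List (Fin n)) :
    Hmat (pext B) (p.map Sum.inl) = Matrix.fromBlocks (Hmat B p) 0 0 0 :=
  Hmat_map_inl (Matrix.toBlocks_fromBlocks₁₁ ..) Matrix.zero_le_one_elem p

/-- the `H`-matrix of the principal extension is concentrated in the
upper-left block. -/
theorem pext_Hmat_block {n : ℕ}
    (B : Matrix (Fin n) (Fin n) ℤ) (hB : IsSkewSymmetrizable B) (p : List (Fin n)) :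
    Hmat (pext B) (p.map Sum.inl) = Matrix.fromBlocks (Hmat B p) 0 0 0 :=
  pext_Hmat_block_general B p
end
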